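/- arXiv:1408.4414 — 4 statements merged into one kernel-verified Lean document; each statement's English description precedes it below -/
import Mathlib

section
/- Let f : S → S³ be a non-conformal harmonic map with adapted coordinate z (so ⟨f₁,f₁⟩ = -1 where f₁ = ∂f), frame F = {f, f₁, f̄₁, N} with inner products given by ⟨f,f⟩=1, ⟨f₁,f₁⟩=⟨f̄₁,f̄₁⟩=-1, ⟨f₁,f̄₁⟩=cosh 2φ, ⟨N,N⟩=1 and all other products zero, and μ = ⟨∂f₁, N⟩. Define fᵉ = (εi/2) sech²φ (f₁ - f̄₁) + tanh φ · N for ε = ±1. Then ∂fᵉ = εi f - (1/2)(μ - 2εi∂φ) sech²φ (csch 2φ · f₁ + coth 2φ · f̄₁ - εi N). -/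
noncomputable section

/-- Wirtinger derivative `∂ = ∂/∂z`. -/
def dz {E : Type*} [NormedAddCommGroup E] [NormedSpace ℂ E] (g : ℂ → E) (z : ℂ) : E :=
  (2 : ℂ)⁻¹ • (fderiv ℝ g z 1 - Complex.I • fderiv ℝ g z Complex.I)

/-- The ℂ-bilinear extension of the Euclidean inner product on `ℝ⁴` to `ℂ⁴`. -/
def binner (v w : Fin 4 → ℂ) : ℂ := ∑ i, v i * w i

lemma dz_sub {E : Type*} [NormedAddCommGroup E] [NormedSpace ℂ E] (u v : ℂ → E) (z : ℂ)
    (hu : DifferentiableAt ℝ u z) (hv : DifferentiableAt ℝ v z) :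
    dz (fun w => u w - v w) z = dz u z - dz v z := by
  unfold dz
  rw [fderiv_fun_sub hu hv]
  simp only [ContinuousLinearMap.sub_apply]
  module

lemma dz_combo {E : Type*} [NormedAddCommGroup E] [NormedSpace ℂ E]
    (A B : ℂ → ℂ) (G M : ℂ → E) (z : ℂ)
    (hA : DifferentiableAt ℝ A z) (hB : DifferentiableAt ℝ B z)
    (hG : DifferentiableAt ℝ G z) (hM : DifferentiableAt ℝ M z) :
    dz (fun w => A w • G w + B w • M w) z
      = dz A z • G z + A z • dz G z + (dz B z • M z + B z • dz M z) := by
  unfold dz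
  rw [fderiv_fun_add (f := fun w => A w • G w) (g := fun w => B w • M w) (hA.smul hG) (hB.smul hM), fderiv_fun_smul hA hG, fderiv_fun_smul hB hM]
  simp only [ContinuousLinearMap.add_apply, ContinuousLinearMap.smul_apply,
    ContinuousLinearMap.smulRight_apply, smul_eq_mul]
  module

lemma dz_const_mul (a : ℂ) (h : ℂ → ℂ) (z : ℂ) (hh : DifferentiableAt ℝ h z) :
    dz (fun w => a * h w) z = a * dz h z := by
  unfold dz
  rw [fderiv_const_mul hh a]
  simp only [ContinuousLinearMap.smul_apply, smul_eq_mul]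
  ring

lemma dz_real_comp (g : ℝ → ℝ) (g' : ℝ) (φ : ℂ → ℝ) (z : ℂ)
    (hg : HasDerivAt g g' (φ z)) (hφ : DifferentiableAt ℝ φ z) :
    dz (fun w => ((g (φ w) : ℝ) : ℂ)) z = (g' : ℂ) * dz (fun w => ((φ w : ℝ) : ℂ)) z := by
  have h1 : HasFDerivAt (fun w => g (φ w)) (g' • fderiv ℝ φ z) z :=
    hg.comp_hasFDerivAt z hφ.hasFDerivAt
  have h2 : HasFDerivAt (fun w => ((g (φ w) : ℝ) : ℂ))
      (Complex.ofRealCLM.comp (g' • fderiv ℝ φ z)) z :=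
    Complex.ofRealCLM.hasFDerivAt.comp z h1
  have h3 : HasFDerivAt (fun w => ((φ w : ℝ) : ℂ))
      (Complex.ofRealCLM.comp (fderiv ℝ φ z)) z :=
    Complex.ofRealCLM.hasFDerivAt.comp z hφ.hasFDerivAt
  unfold dz
  rw [h2.fderiv, h3.fderiv]
  simp only [ContinuousLinearMap.coe_comp', Function.comp_apply,
    ContinuousLinearMap.smul_apply, Complex.ofRealCLM_apply, smul_eq_mul,
    Complex.ofReal_mul]
  ring


open Complex Real in
/-- For a non-conformal harmonic map `f : S → S³` with adapted coordinate `z`, frame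
`F = {f, f₁, f̄₁, N}` satisfying the moving frame equations (2.5), the transform
`fᵉ = (εi/2) sech²φ (f₁ - f̄₁) + tanh φ · N` satisfies
`∂fᵉ = εi f - (1/2)(μ - 2εi∂φ) sech²φ (csch 2φ f₁ + coth 2φ f̄₁ - εi N)`. -/
theorem dz_transform (ε : ℝ) (hε : ε = 1 ∨ ε = -1)
    (φ : ℂ → ℝ) (μ : ℂ → ℂ) (f f1 N fe : ℂ → Fin 4 → ℂ)
    (hφ : ∀ z, 0 < φ z)
    (hsf : ContDiff ℝ (⊤ : ℕ∞) f) (hsf1 : ContDiff ℝ (⊤ : ℕ∞) f1) (hsN : ContDiff ℝ (⊤ : ℕ∞) N)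
    (hsφ : ContDiff ℝ (⊤ : ℕ∞) φ) (hsμ : ContDiff ℝ (⊤ : ℕ∞) μ)
    -- reality of f and N
    (hfr : ∀ z, star (f z) = f z) (hNr : ∀ z, star (N z) = N z)
    -- inner products of the frame (matrix (2.4))
    (hA1 : ∀ z, binner (f z) (f z) = 1)
    (hA2 : ∀ z, binner (f1 z) (f1 z) = -1)
    (hA3 : ∀ z, binner (f1 z) (star (f1 z)) = Real.cosh (2 * φ z))
    (hA4 : ∀ z, binner (N z) (N z) = 1)
    (hA5 : ∀ z, binner (f z) (f1 z) = 0)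
    (hA6 : ∀ z, binner (f z) (N z) = 0)
    (hA7 : ∀ z, binner (f1 z) (N z) = 0)
    (hA8 : ∀ z, binner (star (f1 z)) (N z) = 0)
    -- moving frame equations (2.5)
    (hm1 : ∀ z, dz f z = f1 z)
    (hm2 : ∀ z, dz f1 z = f z
      + (2 * dz (fun w => (φ w : ℂ)) z) •
          (((Real.cosh (2 * φ z) / Real.sinh (2 * φ z) : ℝ) : ℂ) • f1 z
            + (((Real.sinh (2 * φ z))⁻¹ : ℝ) : ℂ) • star (f1 z))
      + μ z • N z)
    (hm3 : ∀ z, dz (fun w => star (f1 w)) z = -((Real.cosh (2 * φ z) : ℝ) : ℂ) • f z)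
    (hm4 : ∀ z, dz N z = -(μ z * (((Real.sinh (2 * φ z))⁻¹ : ℝ) : ℂ)) •
        ((((Real.sinh (2 * φ z))⁻¹ : ℝ) : ℂ) • f1 z
          + ((Real.cosh (2 * φ z) / Real.sinh (2 * φ z) : ℝ) : ℂ) • star (f1 z)))
    (hμ : ∀ z, binner (dz f1 z) (N z) = μ z)
    -- the transform fᵉ
    (hfe : ∀ z, fe z = ((ε : ℂ) * Complex.I / 2 * (((Real.cosh (φ z))⁻¹ ^ 2 : ℝ) : ℂ)) •
        (f1 z - star (f1 z)) + ((Real.tanh (φ z) : ℝ) : ℂ) • N z) :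
    ∀ z, dz fe z = ((ε : ℂ) * Complex.I) • f z
      - ((2 : ℂ)⁻¹ * (μ z - 2 * ε * Complex.I * dz (fun w => (φ w : ℂ)) z)
          * (((Real.cosh (φ z))⁻¹ ^ 2 : ℝ) : ℂ)) •
        ((((Real.sinh (2 * φ z))⁻¹ : ℝ) : ℂ) • f1 z
          + ((Real.cosh (2 * φ z) / Real.sinh (2 * φ z) : ℝ) : ℂ) • star (f1 z)
          - ((ε : ℂ) * Complex.I) • N z) := by
  
  intro z
  have hdφ : DifferentiableAt ℝ φ z := (hsφ.differentiable (by simp)) z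
  have hdf1 : DifferentiableAt ℝ f1 z := (hsf1.differentiable (by simp)) z
  have hdN : DifferentiableAt ℝ N z := (hsN.differentiable (by simp)) z
  have hdsf1 : DifferentiableAt ℝ (fun w => star (f1 w)) z := hdf1.star
  have hc0 : Real.cosh (φ z) ≠ 0 := (Real.cosh_pos (φ z)).ne'
  have hs0 : Real.sinh (φ z) ≠ 0 := (Real.sinh_pos_iff.mpr (hφ z)).ne'
  have hgA : HasDerivAt (fun x : ℝ => (Real.cosh x)⁻¹ ^ 2)
      ((2 : ℕ) * ((Real.cosh (φ z))⁻¹) ^ (2 - 1)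
        * (-(Real.sinh (φ z)) / Real.cosh (φ z) ^ 2)) (φ z) :=
    ((Real.hasDerivAt_cosh (φ z)).inv hc0).pow 2
  have htanh : HasDerivAt Real.tanh
      ((Real.cosh (φ z) * Real.cosh (φ z) - Real.sinh (φ z) * Real.sinh (φ z))
        / Real.cosh (φ z) ^ 2) (φ z) := by
    have h := (Real.hasDerivAt_sinh (φ z)).div (Real.hasDerivAt_cosh (φ z)) hc0
    have e : Real.tanh = Real.sinh / Real.cosh := funext fun x => Real.tanh_eq_sinh_div_cosh x
    rw [e]
    exact h
  have hdg : DifferentiableAt ℝ (fun w => (((Real.cosh (φ w))⁻¹ ^ 2 : ℝ) : ℂ)) z :=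
    (Complex.ofRealCLM.hasFDerivAt.comp z
      (hgA.comp_hasFDerivAt z hdφ.hasFDerivAt)).differentiableAt
  have hdA : DifferentiableAt ℝ
      (fun w => (ε : ℂ) * Complex.I / 2 * (((Real.cosh (φ w))⁻¹ ^ 2 : ℝ) : ℂ)) z :=
    hdg.const_mul _
  have hdB : DifferentiableAt ℝ (fun w => ((Real.tanh (φ w) : ℝ) : ℂ)) z :=
    (Complex.ofRealCLM.hasFDerivAt.comp z
      (htanh.comp_hasFDerivAt z hdφ.hasFDerivAt)).differentiableAt
  have hdG : DifferentiableAt ℝ (fun w => f1 w - star (f1 w)) z := hdf1.sub hdsf1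
  have e1 : dz fe z
      = dz (fun w => (ε : ℂ) * Complex.I / 2 * (((Real.cosh (φ w))⁻¹ ^ 2 : ℝ) : ℂ)) z
          • (f1 z - star (f1 z))
        + ((ε : ℂ) * Complex.I / 2 * (((Real.cosh (φ z))⁻¹ ^ 2 : ℝ) : ℂ))
          • dz (fun w => f1 w - star (f1 w)) z
        + (dz (fun w => ((Real.tanh (φ w) : ℝ) : ℂ)) z • N z
          + ((Real.tanh (φ z) : ℝ) : ℂ) • dz N z) := by
    have hfeq : fe = fun w =>
        ((ε : ℂ) * Complex.I / 2 * (((Real.cosh (φ w))⁻¹ ^ 2 : ℝ) : ℂ))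
          • (f1 w - star (f1 w)) + ((Real.tanh (φ w) : ℝ) : ℂ) • N w := funext hfe
    rw [hfeq]
    exact dz_combo _ _ _ _ z hdA hdB hdG hdN
  have e2 : dz (fun w => f1 w - star (f1 w)) z
      = dz f1 z - dz (fun w => star (f1 w)) z := dz_sub _ _ z hdf1 hdsf1
  have e4 : dz (fun w => (((Real.cosh (φ w))⁻¹ ^ 2 : ℝ) : ℂ)) z
      = ((((2 : ℕ) * ((Real.cosh (φ z))⁻¹) ^ (2 - 1)
          * (-(Real.sinh (φ z)) / Real.cosh (φ z) ^ 2) : ℝ)) : ℂ)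
        * dz (fun w => ((φ w : ℝ) : ℂ)) z := dz_real_comp _ _ φ z hgA hdφ
  have e3 : dz (fun w => (ε : ℂ) * Complex.I / 2 * (((Real.cosh (φ w))⁻¹ ^ 2 : ℝ) : ℂ)) z
      = (ε : ℂ) * Complex.I / 2 * (((((2 : ℕ) * ((Real.cosh (φ z))⁻¹) ^ (2 - 1)
          * (-(Real.sinh (φ z)) / Real.cosh (φ z) ^ 2) : ℝ)) : ℂ)
        * dz (fun w => ((φ w : ℝ) : ℂ)) z) := by
    rw [dz_const_mul _ _ z hdg, e4]
  have e5 : dz (fun w => ((Real.tanh (φ w) : ℝ) : ℂ)) z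
      = (((Real.cosh (φ z) * Real.cosh (φ z) - Real.sinh (φ z) * Real.sinh (φ z))
          / Real.cosh (φ z) ^ 2 : ℝ) : ℂ)
        * dz (fun w => ((φ w : ℝ) : ℂ)) z := dz_real_comp _ _ φ z htanh hdφ
  rw [e1, e2, e3, e5, hm2 z, hm3 z, hm4 z]
  have hab : Complex.cosh (φ z : ℂ) ^ 2 - Complex.sinh (φ z : ℂ) ^ 2 = 1 :=
    Complex.cosh_sq_sub_sinh_sq _
  have ha : Complex.cosh (φ z : ℂ) ≠ 0 := by
    rw [← Complex.ofReal_cosh]; exact_mod_cast hc0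
  have hb : Complex.sinh (φ z : ℂ) ≠ 0 := by
    rw [← Complex.ofReal_sinh]; exact_mod_cast hs0
  have he : (ε : ℂ) * (ε : ℂ) = 1 := by rcases hε with rfl | rfl <;> norm_num
  have hi : Complex.I ^ 2 = -1 := Complex.I_sq
  simp only [Real.cosh_two_mul, Real.sinh_two_mul, Real.tanh_eq_sinh_div_cosh]
  have hu : Complex.sinh (φ z : ℂ) * (Complex.sinh (φ z : ℂ))⁻¹ = 1 := mul_inv_cancel₀ hb
  have hv : Complex.cosh (φ z : ℂ) * (Complex.cosh (φ z : ℂ))⁻¹ = 1 := mul_inv_cancel₀ ha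
  push_cast
  match_scalars
  · field_simp
    linear_combination (2*(ε:ℂ)*Complex.I*(dz (fun w => ((φ w : ℝ) : ℂ)) z)) * hab
  · field_simp
    linear_combination (-2*(ε:ℂ)*Complex.I*(dz (fun w => ((φ w : ℝ) : ℂ)) z)) * hab
  · linear_combination ((ε:ℂ)*Complex.I + (ε:ℂ)*Complex.I*(Complex.cosh (φ z : ℂ))*(Complex.cosh (φ z : ℂ))⁻¹) * hv
        + ((-1 : ℂ)/2*(ε:ℂ)*Complex.I*(Complex.cosh (φ z : ℂ))⁻¹^2) * hab
  · field_simp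
    linear_combination (2*(dz (fun w => ((φ w : ℝ) : ℂ)) z)) * hab + (2*(ε:ℂ)^2*(dz (fun w => ((φ w : ℝ) : ℂ)) z)) * hi + (-2*(dz (fun w => ((φ w : ℝ) : ℂ)) z)) * he
end
end

section
/- Let φ > 0 solve 2∂∂̄φ = -sinh 2φ + |μ|² csch 2φ and ∂̄μ = -2μ̄ ∂φ csch 2φ on a connected open set, and suppose μ = 2εi∂φ holds identically on an open subset (ε = ±1). Then one obtains sinh 2φ = 0 on that subset, a contradiction; hence the set where μ ≠ 2εi∂φ is open and dense. -/
noncomputable section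

/-- Wirtinger derivative `∂̄ = ∂/∂z̄`. -/
def dzbar {E : Type*} [NormedAddCommGroup E] [NormedSpace ℂ E] (g : ℂ → E) (z : ℂ) : E :=
  (2 : ℂ)⁻¹ • (fderiv ℝ g z 1 + Complex.I • fderiv ℝ g z Complex.I)

private lemma dzbar_congr {f g : ℂ → ℂ} {z : ℂ} (h : f =ᶠ[nhds z] g) :
    dzbar f z = dzbar g z := by
  unfold dzbar; rw [h.fderiv_eq]

private lemma dzbar_const_mul {g : ℂ → ℂ} {z : ℂ} (c : ℂ) (hg : DifferentiableAt ℝ g z) :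
    dzbar (fun w => c * g w) z = c * dzbar g z := by
  unfold dzbar
  simp only [← smul_eq_mul (α := ℂ)]
  rw [fderiv_fun_const_smul hg c]
  simp only [ContinuousLinearMap.coe_smul', Pi.smul_apply, smul_eq_mul]
  ring

private lemma dz_dzbar_ofReal {φ : ℂ → ℝ} {z : ℂ} (h : DifferentiableAt ℝ φ z) :
    dzbar (fun w => (φ w : ℂ)) z = starRingEnd ℂ (dz (fun w => (φ w : ℂ)) z) := by
  have hd : fderiv ℝ (fun w => (φ w : ℂ)) z = Complex.ofRealCLM.comp (fderiv ℝ φ z) :=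
    (Complex.ofRealCLM.hasFDerivAt.comp z h.hasFDerivAt).fderiv
  unfold dz dzbar
  rw [hd]
  simp only [ContinuousLinearMap.coe_comp', Function.comp_apply, Complex.ofRealCLM_apply,
    smul_eq_mul, map_mul, map_inv₀, map_sub, map_add, Complex.conj_ofReal, Complex.conj_I,
    map_ofNat]
  ring

/-- Symmetry of mixed Wirtinger derivatives and differentiability of `dz f`, `dzbar f`. -/
private lemma wirt_second {U : Set ℂ} (hU : IsOpen U) {f : ℂ → ℂ}
    (hf : ContDiffOn ℝ (⊤ : ℕ∞) f U) {z : ℂ} (hz : z ∈ U) :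
    DifferentiableAt ℝ (fun w => dz f w) z ∧
    dzbar (fun w => dz f w) z = dz (fun w => dzbar f w) z := by
  set F := fderiv ℝ f with hFdef
  have hF : ContDiffOn ℝ 1 F U := hf.fderiv_of_isOpen hU (by exact WithTop.coe_le_coe.mpr le_top)
  have hdF : DifferentiableAt ℝ F z :=
    (hF.contDiffAt (hU.mem_nhds hz)).differentiableAt one_ne_zero
  set F'' := fderiv ℝ F z with hF''def
  have hFz : HasFDerivAt F F'' z := hdF.hasFDerivAt
  have hev : ∀ᶠ y in nhds z, HasFDerivAt f (F y) y := by
    filter_upwards [hU.mem_nhds hz] with y hy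
    exact (((hf.contDiffAt (hU.mem_nhds hy)).differentiableAt (by simp))).hasFDerivAt
  have hsymm : F'' 1 Complex.I = F'' Complex.I 1 :=
    second_derivative_symmetric_of_eventually hev hFz 1 Complex.I
  have happ : ∀ v : ℂ, HasFDerivAt (fun w => F w v)
      ((ContinuousLinearMap.apply ℝ ℂ v).comp F'') z := fun v =>
    (ContinuousLinearMap.apply ℝ ℂ v).hasFDerivAt.comp z hFz
  have hdz : HasFDerivAt (fun w => dz f w)
      ((2 : ℂ)⁻¹ • (((ContinuousLinearMap.apply ℝ ℂ 1).comp F'')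
        - Complex.I • ((ContinuousLinearMap.apply ℝ ℂ Complex.I).comp F''))) z := by
    exact (((happ 1).sub ((happ Complex.I).const_smul Complex.I)).const_smul ((2:ℂ)⁻¹))
  have hdzbar : HasFDerivAt (fun w => dzbar f w)
      ((2 : ℂ)⁻¹ • (((ContinuousLinearMap.apply ℝ ℂ 1).comp F'')
        + Complex.I • ((ContinuousLinearMap.apply ℝ ℂ Complex.I).comp F''))) z := by
    exact (((happ 1).add ((happ Complex.I).const_smul Complex.I)).const_smul ((2:ℂ)⁻¹))
  refine ⟨hdz.differentiableAt, ?_⟩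
  rw [show dzbar (fun w => dz f w) z = (2 : ℂ)⁻¹ • ((fderiv ℝ (fun w => dz f w) z) 1
        + Complex.I • (fderiv ℝ (fun w => dz f w) z) Complex.I) from rfl,
    show dz (fun w => dzbar f w) z = (2 : ℂ)⁻¹ • ((fderiv ℝ (fun w => dzbar f w) z) 1
        - Complex.I • (fderiv ℝ (fun w => dzbar f w) z) Complex.I) from rfl,
    hdz.fderiv, hdzbar.fderiv]
  simp only [ContinuousLinearMap.coe_smul', Pi.smul_apply, ContinuousLinearMap.coe_sub',
    ContinuousLinearMap.coe_add', Pi.sub_apply, Pi.add_apply, ContinuousLinearMap.coe_comp',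
    Function.comp_apply, ContinuousLinearMap.apply_apply, smul_eq_mul]
  rw [hsymm]
  ring

/-- Let `φ > 0` and `μ` satisfy the compatibility conditions
`2∂∂̄φ = -sinh 2φ + |μ|² csch 2φ` and `∂̄μ = -2μ̄ ∂φ csch 2φ` on a connected open set `U`.
If `μ = 2εi∂φ` held identically on a nonempty open subset of `U`, then `sinh 2φ = 0`
there, a contradiction; hence the set where `μ ≠ 2εi∂φ` is open and dense in `U`. -/
theorem transform_nondegenerate (ε : ℝ) (hε : ε = 1 ∨ ε = -1)
    (U : Set ℂ) (hU : IsOpen U) (hUconn : IsConnected U)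
    (φ : ℂ → ℝ) (μ : ℂ → ℂ)
    (hφpos : ∀ z ∈ U, 0 < φ z)
    (hsφ : ContDiffOn ℝ (⊤ : ℕ∞) φ U) (hsμ : ContDiffOn ℝ (⊤ : ℕ∞) μ U)
    (hc1 : ∀ z ∈ U, 2 * dz (fun w => dzbar (fun u => (φ u : ℂ)) w) z
      = -((Real.sinh (2 * φ z) : ℝ) : ℂ)
        + ((‖μ z‖ ^ 2 : ℝ) : ℂ) * (((Real.sinh (2 * φ z))⁻¹ : ℝ) : ℂ))
    (hc2 : ∀ z ∈ U, dzbar μ z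
      = -2 * star (μ z) * dz (fun w => (φ w : ℂ)) z
          * (((Real.sinh (2 * φ z))⁻¹ : ℝ) : ℂ)) :
    (∀ V : Set ℂ, V ⊆ U → IsOpen V → V.Nonempty →
        (∀ z ∈ V, μ z = 2 * ε * Complex.I * dz (fun w => (φ w : ℂ)) z) → False) ∧
      IsOpen {z | z ∈ U ∧ μ z ≠ 2 * ε * Complex.I * dz (fun w => (φ w : ℂ)) z} ∧
      U ⊆ closure {z | z ∈ U ∧ μ z ≠ 2 * ε * Complex.I * dz (fun w => (φ w : ℂ)) z} := by
  classical
  set f : ℂ → ℂ := fun u => ((φ u : ℂ)) with hfdef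
  set cε : ℂ := 2 * (ε : ℂ) * Complex.I with hcdef
  have hsf : ContDiffOn ℝ (⊤ : ℕ∞) f U := Complex.ofRealCLM.contDiff.comp_contDiffOn hsφ
  have hcε0 : cε ≠ 0 := by
    rcases hε with h | h <;> subst h <;> simp [hcdef, Complex.ext_iff]
  have hcsq : cε * cε = -4 := by
    rw [hcdef]
    rcases hε with h | h <;> rw [h] <;> push_cast <;>
      linear_combination (4 : ℂ) * Complex.I_mul_I
  have hconjc : starRingEnd ℂ cε = -cε := by
    rw [hcdef]
    simp only [map_mul, Complex.conj_I, Complex.conj_ofReal, map_ofNat]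
    ring
  -- Part 1 : contradiction on any open subset where μ = cε ∂φ
  have part1 : ∀ V : Set ℂ, V ⊆ U → IsOpen V → V.Nonempty →
      (∀ z ∈ V, μ z = cε * dz f z) → False := by
    rintro V hVU hVopen ⟨z, hzV⟩ hμV
    have hzU : z ∈ U := hVU hzV
    obtain ⟨hdzf, hcomm⟩ := wirt_second hU hsf hzU
    have hφd : DifferentiableAt ℝ φ z :=
      (hsφ.contDiffAt (hU.mem_nhds hzU)).differentiableAt (by simp)
    set p : ℂ := dz f z with hp
    set q : ℂ := starRingEnd ℂ p with hqdef
    have hq : dzbar f z = q := dz_dzbar_ofReal hφd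
    have hconj : starRingEnd ℂ (μ z) = -cε * q := by
      rw [hμV z hzV, map_mul, hconjc, hqdef, hp]
    set s : ℂ := (((Real.sinh (2 * φ z))⁻¹ : ℝ) : ℂ) with hsdef
    set X : ℂ := dz (fun w => dzbar f w) z with hX
    have hd1 : dzbar μ z = cε * X := by
      have he : dzbar μ z = dzbar (fun w => cε * dz f w) z := by
        apply dzbar_congr
        filter_upwards [hVopen.mem_nhds hzV] with w hw using hμV w hw
      rw [he, dzbar_const_mul cε hdzf, hcomm]
    have hc2' := hc2 z hzU
    rw [Complex.star_def, hconj, hd1] at hc2'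
    -- hc2' : cε * X = -2 * (-cε * q) * p * s
    have hXval : X = 2 * q * p * s := by
      apply mul_left_cancel₀ hcε0
      rw [hc2']; ring
    have hA : ((‖μ z‖ ^ 2 : ℝ) : ℂ) = 4 * p * q := by
      have h1 : ((‖μ z‖ ^ 2 : ℝ) : ℂ) = μ z * starRingEnd ℂ (μ z) := by
        rw [Complex.sq_norm, Complex.mul_conj]
      rw [h1, hconj, hμV z hzV, ← hp]
      linear_combination (-(p * q)) * hcsq
    have hc1' := hc1 z hzU
    rw [hA, ← hX, hXval] at hc1'
    have hS : ((Real.sinh (2 * φ z) : ℝ) : ℂ) = 0 := by linear_combination hc1'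
    have hS' : Real.sinh (2 * φ z) = 0 := by exact_mod_cast hS
    have hpos : 0 < Real.sinh (2 * φ z) :=
      Real.sinh_pos_iff.2 (by linarith [hφpos z hzU])
    exact hpos.ne' hS'
  -- Continuity of dz f on U
  have hFcont : ContinuousOn (fderiv ℝ f) U :=
    hsf.continuousOn_fderiv_of_isOpen hU (by simp)
  have h1c : ContinuousOn (fun z => fderiv ℝ f z 1) U :=
    (ContinuousLinearMap.apply ℝ ℂ (1 : ℂ)).continuous.comp_continuousOn hFcont
  have hIc : ContinuousOn (fun z => fderiv ℝ f z Complex.I) U :=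
    (ContinuousLinearMap.apply ℝ ℂ Complex.I).continuous.comp_continuousOn hFcont
  have hdzc : ContinuousOn (fun z => dz f z) U :=
    ((h1c.sub (hIc.const_smul Complex.I)).const_smul ((2 : ℂ)⁻¹))
  have hdiffc : ContinuousOn (fun z => μ z - cε * dz f z) U :=
    hsμ.continuousOn.sub (continuousOn_const.mul hdzc)
  have hopen : IsOpen {z | z ∈ U ∧ μ z ≠ cε * dz f z} := by
    have h := hdiffc.isOpen_inter_preimage hU (isOpen_compl_singleton (x := (0 : ℂ)))
    convert h using 1
    ext w
    simp only [Set.mem_setOf_eq, Set.mem_inter_iff, Set.mem_preimage, Set.mem_compl_iff,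
      Set.mem_singleton_iff, sub_ne_zero]
  refine ⟨part1, hopen, ?_⟩
  intro z hzU
  by_contra hcl
  rw [mem_closure_iff] at hcl
  push_neg at hcl
  obtain ⟨o, ho, hzo, hdisj⟩ := hcl
  have hVopen : IsOpen (o ∩ U) := ho.inter hU
  refine part1 (o ∩ U) Set.inter_subset_right hVopen ⟨z, hzo, hzU⟩ ?_
  intro w hw
  by_contra hne
  have hmem : w ∈ o ∩ {z | z ∈ U ∧ μ z ≠ cε * dz f z} := ⟨hw.1, hw.2, hne⟩
  rw [hdisj] at hmem
  exact hmem
end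
end

section
/- Let f be a non-conformal harmonic map to S³ with frame data (φ, μ) satisfying the compatibility conditions, and suppose φ = φᵉ and μ = μᵉ (where (φᵉ,μᵉ) are the frame data of the ε-transform, related by the identities of the previous lemma). Then ∂φ = 0, so φ is constant; conversely if φ is constant on a connected surface, then φ = φᵉ and μ = μᵉ. -/
noncomputable section

lemma dz_const {E : Type*} [NormedAddCommGroup E] [NormedSpace ℂ E] (c : E) (z : ℂ) :
    dz (fun _ => c) z = 0 := by
  simp [dz, fderiv_const]

lemma dzbar_const {E : Type*} [NormedAddCommGroup E] [NormedSpace ℂ E] (c : E) (z : ℂ) :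
    dzbar (fun _ => c) z = 0 := by
  simp [dzbar, fderiv_const]

lemma fderiv_ofReal_comp (f : ℂ → ℝ) (hf : Differentiable ℝ f) (z v : ℂ) :
    fderiv ℝ (fun w => ((f w : ℝ) : ℂ)) z v = ((fderiv ℝ f z v : ℝ) : ℂ) := by
  have : fderiv ℝ (fun w => ((f w : ℝ) : ℂ)) z = Complex.ofRealCLM.comp (fderiv ℝ f z) :=
    (Complex.ofRealCLM.hasFDerivAt.comp z (hf z).hasFDerivAt).fderiv
  rw [this]; rfl

lemma fderiv_zero_of_dz_real (f : ℂ → ℝ) (hf : Differentiable ℝ f) (z : ℂ)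
    (h : dz (fun w => ((f w : ℝ) : ℂ)) z = 0) : fderiv ℝ f z = 0 := by
  have h1 := fderiv_ofReal_comp f hf z 1
  have h2 := fderiv_ofReal_comp f hf z Complex.I
  unfold dz at h
  rw [h1, h2] at h
  have h' : ((fderiv ℝ f z 1 : ℝ) : ℂ) - Complex.I * ((fderiv ℝ f z Complex.I : ℝ) : ℂ) = 0 := by
    field_simp at h
    simpa [smul_eq_mul] using h
  have ha : fderiv ℝ f z 1 = 0 := by
    have := congrArg Complex.re h'; simpa using this
  have hb : fderiv ℝ f z Complex.I = 0 := by
    have := congrArg Complex.im h'; simpa using this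
  ext v
  have : v = v.re • (1 : ℂ) + v.im • Complex.I := by
    simp [Complex.ext_iff]
  rw [this, map_add, map_smul, map_smul, ha, hb]
  simp


/-- Let `(φ, μ)` be the frame data of a non-conformal harmonic map (satisfying the
compatibility conditions), and `(φᵉ, μᵉ)` the frame data of its `ε`-transform, related by
`4 sinh²φᵉ = |μ - 2εi∂φ|² sech²φ` and `tanh φᵉ (μᵉ + 2εi∂φᵉ) = tanh φ (μ - 2εi∂φ)`.
If `φ = φᵉ` and `μ = μᵉ`, then `∂φ = 0`, so `φ` is constant; conversely, if `φ` is
constant, then `φ = φᵉ` and `μ = μᵉ`. -/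
theorem transform_congruence_data (ε : ℝ) (hε : ε = 1 ∨ ε = -1)
    (φ φe : ℂ → ℝ) (μ μe : ℂ → ℂ)
    (hsφ : ContDiff ℝ (⊤ : ℕ∞) φ) (hsφe : ContDiff ℝ (⊤ : ℕ∞) φe)
    (hsμ : ContDiff ℝ (⊤ : ℕ∞) μ) (hsμe : ContDiff ℝ (⊤ : ℕ∞) μe)
    (hφpos : ∀ z, 0 < φ z) (hφepos : ∀ z, 0 ≤ φe z)
    -- compatibility conditions for (φ, μ)
    (hc1 : ∀ z, 2 * dz (fun w => dzbar (fun u => (φ u : ℂ)) w) z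
      = -((Real.sinh (2 * φ z) : ℝ) : ℂ)
        + ((‖μ z‖ ^ 2 : ℝ) : ℂ) * (((Real.sinh (2 * φ z))⁻¹ : ℝ) : ℂ))
    (hc2 : ∀ z, dzbar μ z
      = -2 * star (μ z) * dz (fun w => (φ w : ℂ)) z
          * (((Real.sinh (2 * φ z))⁻¹ : ℝ) : ℂ))
    -- the relations between (φ, μ) and (φᵉ, μᵉ)
    (hr1 : ∀ z, 4 * Real.sinh (φe z) ^ 2
      = ‖μ z - 2 * ε * Complex.I * dz (fun w => (φ w : ℂ)) z‖ ^ 2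
        * ((Real.cosh (φ z))⁻¹ ^ 2))
    (hr2 : ∀ z, ((Real.tanh (φe z) : ℝ) : ℂ)
        * (μe z + 2 * ε * Complex.I * dz (fun w => (φe w : ℂ)) z)
      = ((Real.tanh (φ z) : ℝ) : ℂ)
        * (μ z - 2 * ε * Complex.I * dz (fun w => (φ w : ℂ)) z)) :
    (φ = φe ∧ μ = μe →
      (∀ z, dz (fun w => (φ w : ℂ)) z = 0) ∧ ∀ z w, φ z = φ w) ∧
    ((∀ z w, φ z = φ w) → φ = φe ∧ μ = μe) := by
  have hεne : (ε : ℂ) ≠ 0 := by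
    rcases hε with h | h <;> rw [h] <;> norm_num
  have htanh : ∀ z, Real.tanh (φ z) ≠ 0 := by
    intro z
    have := Real.sinh_pos_iff.2 (hφpos z)
    have hc := Real.cosh_pos (x := φ z)
    rw [Real.tanh_eq_sinh_div_cosh]
    positivity
  constructor
  · rintro ⟨hφ, hμ⟩
    subst hφ; subst hμ
    have hdz : ∀ z, dz (fun w => (φ w : ℂ)) z = 0 := by
      intro z
      have h := hr2 z
      have hcancel := mul_left_cancel₀ (Complex.ofReal_ne_zero.2 (htanh z)) h
      have : (4 : ℂ) * ε * Complex.I * dz (fun w => (φ w : ℂ)) z = 0 := by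
        linear_combination hcancel
      have h4 : (4 : ℂ) * ε * Complex.I ≠ 0 := by
        simp [hεne, Complex.I_ne_zero]
      exact (mul_eq_zero.1 this).resolve_left h4
    refine ⟨hdz, ?_⟩
    have hd : ∀ z, fderiv ℝ φ z = 0 := fun z =>
      fderiv_zero_of_dz_real φ (hsφ.differentiable (by simp)) z (hdz z)
    exact is_const_of_fderiv_eq_zero (hsφ.differentiable (by simp)) hd
  · intro hconst
    have hφc : (fun w => (φ w : ℂ)) = fun _ => ((φ 0 : ℝ) : ℂ) :=
      funext fun w => by rw [hconst w 0]
    have hdzφ : ∀ z, dz (fun w => (φ w : ℂ)) z = 0 := by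
      intro z; rw [hφc]; exact dz_const _ z
    have hdzbarφ : (fun w => dzbar (fun u => (φ u : ℂ)) w) = fun _ => (0 : ℂ) :=
      funext fun w => by rw [hφc]; exact dzbar_const _ w
    -- compatibility gives |μ|² = sinh²(2φ)
    have hmu2 : ∀ z, ‖μ z‖ ^ 2 = Real.sinh (2 * φ z) ^ 2 := by
      intro z
      have h := hc1 z
      rw [hdzbarφ, dz_const, mul_zero] at h
      have hr : (0 : ℝ) = -Real.sinh (2 * φ z)
          + ‖μ z‖ ^ 2 * (Real.sinh (2 * φ z))⁻¹ := by
        exact_mod_cast h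
      have hs : (0 : ℝ) < Real.sinh (2 * φ z) :=
        Real.sinh_pos_iff.2 (by linarith [hφpos z])
      field_simp at hr
      nlinarith [hr]
    have hφe : ∀ z, φe z = φ z := by
      intro z
      have h := hr1 z
      rw [hdzφ z, mul_zero, sub_zero] at h
      rw [hmu2 z, Real.sinh_two_mul] at h
      have hc := Real.cosh_pos (x := φ z)
      have hsq : Real.sinh (φe z) ^ 2 = Real.sinh (φ z) ^ 2 := by
        have hc' : Real.cosh (φ z) ≠ 0 := ne_of_gt hc
        field_simp at h
        nlinarith [h, sq_nonneg (Real.cosh (φ z)), mul_pos hc hc]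
      have h1 : 0 ≤ Real.sinh (φe z) := Real.sinh_nonneg_iff.2 (hφepos z)
      have h2 : 0 < Real.sinh (φ z) := Real.sinh_pos_iff.2 (hφpos z)
      have : Real.sinh (φe z) = Real.sinh (φ z) := by nlinarith [hsq]
      exact Real.sinh_injective this
    have hφeq : φ = φe := funext fun z => (hφe z).symm
    refine ⟨hφeq, ?_⟩
    have hφec : (fun w => (φe w : ℂ)) = fun _ => ((φ 0 : ℝ) : ℂ) :=
      funext fun w => by rw [hφe w, hconst w 0]
    funext z
    have h := hr2 z
    rw [hφec, dz_const, mul_zero, add_zero, hdzφ z, mul_zero, sub_zero, hφe z] at h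
    exact (mul_left_cancel₀ (Complex.ofReal_ne_zero.2 (htanh z)) h).symm
end
end

section
/- Let r, s > 0 with r² + s² = 1, φ > 0, and θ = (1/2) arccos((s²-r²) cosh 2φ) (assuming |(s²-r²) cosh 2φ| ≤ 1). Define a = (2/r) sinh φ cos θ, b = -(2/r) cosh φ sin θ, c = (2/s) sinh φ sin θ, d = (2/s) cosh φ cos θ, and f(x,y) = (r cos(ax+by), r sin(ax+by), s cos(cx+dy), s sin(cx+dy)). Then f maps into S³, satisfies f_xx + f_yy = -(|f_x|² + |f_y|²) f, and ⟨f_x,f_x⟩ = 4 sinh²φ, ⟨f_x,f_y⟩ = 0, ⟨f_y,f_y⟩ = 4 cosh²φ. -/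
/-!
Write `f = (r cos α, r sin α, s cos β, s sin β)` with phases `α = ax + by`, `β = cx + dy`.
Differentiating such a torus point multiplies its radii by the derivatives of the phases and
advances both phases by `π/2`; since `π/2 + π/2 = π`, `f_xx` is the torus point with radii
`(r a², s c²)` and phases `(α, β)`, negated. So `Δf = -λ f` as soon as `a² + b² = c² + d² = λ`, and
`|f_x|² + |f_y|² = λ (r² + s²) = λ`. For the given coefficients
`r² (a² + b²) = 2 (cosh 2φ - cos 2θ)` and `s² (c² + d²) = 2 (cosh 2φ + cos 2θ)`, so with
`r² + s² = 1` the condition `a² + b² = c² + d²` is exactly `cos 2θ = (s² - r²) cosh 2φ`.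
-/

open Real

noncomputable def torusPoint (r s α β : ℝ) : Fin 4 → ℝ :=
  ![r * cos α, r * sin α, s * cos β, s * sin β]

theorem sum_torusPoint_mul_torusPoint (r s r' s' α β : ℝ) :
    ∑ i, torusPoint r s α β i * torusPoint r' s' α β i = r * r' + s * s' := by
  simp only [torusPoint, Fin.sum_univ_four, Matrix.cons_val_zero, Matrix.cons_val_one,
    Matrix.cons_val_two, Matrix.cons_val_three, Matrix.head_cons, Matrix.tail_cons]
  linear_combination r * r' * sin_sq_add_cos_sq α + s * s' * sin_sq_add_cos_sq β

theorem sum_torusPoint_sq (r s α β : ℝ) :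
    ∑ i, torusPoint r s α β i ^ 2 = r ^ 2 + s ^ 2 := by
  simp only [sq, sum_torusPoint_mul_torusPoint]

theorem torusPoint_add_pi (r s α β : ℝ) :
    torusPoint r s (α + π) (β + π) = -torusPoint r s α β := by
  simp only [torusPoint, cos_add_pi, sin_add_pi, mul_neg, Matrix.neg_cons, Matrix.neg_empty]

theorem torusPoint_add_pi_div_two_add_pi_div_two (r s α β : ℝ) :
    torusPoint r s (α + π / 2 + π / 2) (β + π / 2 + π / 2) = -torusPoint r s α β := by
  rw [add_assoc α, add_assoc β, add_halves, torusPoint_add_pi]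

theorem torusPoint_add (r s r' s' α β : ℝ) :
    torusPoint r s α β + torusPoint r' s' α β = torusPoint (r + r') (s + s') α β := by
  simp only [torusPoint, Matrix.cons_add_cons, Matrix.empty_add_empty, add_mul]

theorem smul_torusPoint (k r s α β : ℝ) :
    k • torusPoint r s α β = torusPoint (k * r) (k * s) α β := by
  simp only [torusPoint, Matrix.smul_cons, Matrix.smul_empty, smul_eq_mul, mul_assoc]

theorem HasDerivAt.torusPoint (r s : ℝ) {α β : ℝ → ℝ} {α' β' t : ℝ}
    (hα : HasDerivAt α α' t) (hβ : HasDerivAt β β' t) :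
    HasDerivAt (fun u => _root_.torusPoint r s (α u) (β u))
      (_root_.torusPoint (r * α') (s * β') (α t + π / 2) (β t + π / 2)) t := by
  refine hasDerivAt_pi.mpr fun i => ?_
  fin_cases i <;> simp only [_root_.torusPoint, cos_add_pi_div_two, sin_add_pi_div_two,
    Fin.zero_eta, Fin.mk_one, Fin.reduceFinMk, Matrix.cons_val]
  · exact (hα.cos.const_mul r).congr_deriv (by ring)
  · exact (hα.sin.const_mul r).congr_deriv (by ring)
  · exact (hβ.cos.const_mul s).congr_deriv (by ring)
  · exact (hβ.sin.const_mul s).congr_deriv (by ring)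

section LinearPhases

variable (r s a b c d x y : ℝ)

theorem hasDerivAt_torusPoint_linear_fst (t : ℝ) :
    HasDerivAt (fun u => torusPoint r s (a * u + b * y) (c * u + d * y))
      (torusPoint (r * a) (s * c) (a * t + b * y + π / 2) (c * t + d * y + π / 2)) t :=
  .torusPoint r s ((hasDerivAt_const_mul a).add_const _) ((hasDerivAt_const_mul c).add_const _)

theorem hasDerivAt_torusPoint_linear_snd (t : ℝ) :
    HasDerivAt (fun u => torusPoint r s (a * x + b * u) (c * x + d * u))
      (torusPoint (r * b) (s * d) (a * x + b * t + π / 2) (c * x + d * t + π / 2)) t :=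
  .torusPoint r s ((hasDerivAt_const_mul b).const_add _) ((hasDerivAt_const_mul d).const_add _)

theorem deriv_deriv_torusPoint_linear_fst :
    deriv (fun t => deriv (fun u => torusPoint r s (a * u + b * y) (c * u + d * y)) t) x
      = -torusPoint (r * a ^ 2) (s * c ^ 2) (a * x + b * y) (c * x + d * y) := by
  simp only [fun t => (hasDerivAt_torusPoint_linear_fst r s a b c d y t).deriv]
  rw [(HasDerivAt.torusPoint (r * a) (s * c)
      (((hasDerivAt_const_mul a).add_const (b * y)).add_const _)
      (((hasDerivAt_const_mul c).add_const (d * y)).add_const _)).deriv,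
    torusPoint_add_pi_div_two_add_pi_div_two, mul_assoc, mul_assoc, ← sq, ← sq]

theorem deriv_deriv_torusPoint_linear_snd :
    deriv (fun t => deriv (fun u => torusPoint r s (a * x + b * u) (c * x + d * u)) t) y
      = -torusPoint (r * b ^ 2) (s * d ^ 2) (a * x + b * y) (c * x + d * y) := by
  simp only [fun t => (hasDerivAt_torusPoint_linear_snd r s a b c d x t).deriv]
  rw [(HasDerivAt.torusPoint (r * b) (s * d)
      (((hasDerivAt_const_mul b).const_add (a * x)).add_const _)
      (((hasDerivAt_const_mul d).const_add (c * x)).add_const _)).deriv,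
    torusPoint_add_pi_div_two_add_pi_div_two, mul_assoc, mul_assoc, ← sq, ← sq]

theorem torusPoint_linear_harmonic (hrs : r ^ 2 + s ^ 2 = 1)
    (habcd : a ^ 2 + b ^ 2 = c ^ 2 + d ^ 2) :
    deriv (fun t => deriv (fun u => torusPoint r s (a * u + b * y) (c * u + d * y)) t) x
        + deriv (fun t => deriv (fun u => torusPoint r s (a * x + b * u) (c * x + d * u)) t) y
      = -((∑ i, (deriv (fun t => torusPoint r s (a * t + b * y) (c * t + d * y)) x i) ^ 2)
          + (∑ i, (deriv (fun u => torusPoint r s (a * x + b * u) (c * x + d * u)) y i) ^ 2))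
        • torusPoint r s (a * x + b * y) (c * x + d * y) := by
  rw [deriv_deriv_torusPoint_linear_fst, deriv_deriv_torusPoint_linear_snd,
    (hasDerivAt_torusPoint_linear_fst r s a b c d y x).deriv,
    (hasDerivAt_torusPoint_linear_snd r s a b c d x y).deriv, sum_torusPoint_sq,
    sum_torusPoint_sq, ← neg_add, torusPoint_add, neg_smul, smul_torusPoint]
  congr 2
  · linear_combination -r * (a ^ 2 + b ^ 2) * hrs + r * s ^ 2 * habcd
  · linear_combination -s * (c ^ 2 + d ^ 2) * hrs - s * r ^ 2 * habcd

end LinearPhases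

section CliffordCoefficients

variable {r s φ θ a b c d : ℝ}

theorem clifford_coeff_energy_fst (hr : r ≠ 0) (hs : s ≠ 0) (ha : a = 2 / r * sinh φ * cos θ)
    (hc : c = 2 / s * sinh φ * sin θ) :
    r * a * (r * a) + s * c * (s * c) = 4 * sinh φ ^ 2 := by
  subst ha hc
  field_simp
  linear_combination 4 * sinh φ ^ 2 * cos_sq_add_sin_sq θ

theorem clifford_coeff_orthogonal (hr : r ≠ 0) (hs : s ≠ 0) (ha : a = 2 / r * sinh φ * cos θ)
    (hb : b = -(2 / r) * cosh φ * sin θ) (hc : c = 2 / s * sinh φ * sin θ)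
    (hd : d = 2 / s * cosh φ * cos θ) :
    r * a * (r * b) + s * c * (s * d) = 0 := by
  subst ha hb hc hd
  field_simp
  ring

theorem clifford_coeff_energy_snd (hr : r ≠ 0) (hs : s ≠ 0) (hb : b = -(2 / r) * cosh φ * sin θ)
    (hd : d = 2 / s * cosh φ * cos θ) :
    r * b * (r * b) + s * d * (s * d) = 4 * cosh φ ^ 2 := by
  subst hb hd
  field_simp
  linear_combination 4 * sin_sq_add_cos_sq θ

theorem clifford_coeff_sq_add_sq_fst (hr : r ≠ 0) (ha : a = 2 / r * sinh φ * cos θ)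
    (hb : b = -(2 / r) * cosh φ * sin θ) :
    r ^ 2 * (a ^ 2 + b ^ 2) = 2 * (cosh (2 * φ) - cos (2 * θ)) := by
  subst ha hb
  field_simp
  rw [cosh_two_mul, cos_two_mul]
  linear_combination (2 * sin θ ^ 2 - 1) * cosh_sq φ + 2 * (sinh φ ^ 2 + 1) * sin_sq_add_cos_sq θ

theorem clifford_coeff_sq_add_sq_snd (hs : s ≠ 0) (hc : c = 2 / s * sinh φ * sin θ)
    (hd : d = 2 / s * cosh φ * cos θ) :
    s ^ 2 * (c ^ 2 + d ^ 2) = 2 * (cosh (2 * φ) + cos (2 * θ)) := by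
  subst hc hd
  field_simp
  rw [cosh_two_mul, cos_two_mul]
  linear_combination (2 * cos θ ^ 2 - 1) * cosh_sq φ + 2 * sinh φ ^ 2 * sin_sq_add_cos_sq θ

theorem clifford_coeff_sq_add_sq_eq (hr : r ≠ 0) (hs : s ≠ 0)
    (hrs : r ^ 2 + s ^ 2 = 1) (hθ : cos (2 * θ) = (s ^ 2 - r ^ 2) * cosh (2 * φ))
    (ha : a = 2 / r * sinh φ * cos θ) (hb : b = -(2 / r) * cosh φ * sin θ)
    (hc : c = 2 / s * sinh φ * sin θ) (hd : d = 2 / s * cosh φ * cos θ) :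
    a ^ 2 + b ^ 2 = c ^ 2 + d ^ 2 := by
  refine mul_left_cancel₀ (mul_ne_zero (pow_ne_zero 2 hr) (pow_ne_zero 2 hs)) ?_
  linear_combination s ^ 2 * clifford_coeff_sq_add_sq_fst hr ha hb
    - r ^ 2 * clifford_coeff_sq_add_sq_snd hs hc hd - 2 * hθ - 2 * cos (2 * θ) * hrs

end CliffordCoefficients

theorem clifford_torus_harmonic_general (r s φ θ a b c d : ℝ)
    (hr : r ≠ 0) (hs : s ≠ 0) (hrs : r ^ 2 + s ^ 2 = 1)
    (hbound : |(s ^ 2 - r ^ 2) * Real.cosh (2 * φ)| ≤ 1)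
    (hθ : θ = (1 / 2) * Real.arccos ((s ^ 2 - r ^ 2) * Real.cosh (2 * φ)))
    (ha : a = (2 / r) * Real.sinh φ * Real.cos θ)
    (hb : b = -(2 / r) * Real.cosh φ * Real.sin θ)
    (hc : c = (2 / s) * Real.sinh φ * Real.sin θ)
    (hd : d = (2 / s) * Real.cosh φ * Real.cos θ)
    (f : ℝ → ℝ → Fin 4 → ℝ)
    (hf : ∀ x y, f x y = ![r * Real.cos (a * x + b * y), r * Real.sin (a * x + b * y),
      s * Real.cos (c * x + d * y), s * Real.sin (c * x + d * y)]) :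
    ∀ x y,
      (∑ i, f x y i ^ 2) = 1 ∧
      deriv (fun t => deriv (fun u => f u y) t) x
          + deriv (fun t => deriv (fun u => f x u) t) y
        = -((∑ i, (deriv (fun t => f t y) x i) ^ 2)
            + (∑ i, (deriv (fun u => f x u) y i) ^ 2)) • f x y ∧
      (∑ i, deriv (fun t => f t y) x i * deriv (fun t => f t y) x i)
        = 4 * Real.sinh φ ^ 2 ∧
      (∑ i, deriv (fun t => f t y) x i * deriv (fun u => f x u) y i) = 0 ∧
      (∑ i, deriv (fun u => f x u) y i * deriv (fun u => f x u) y i)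
        = 4 * Real.cosh φ ^ 2 := by
  have hcos : cos (2 * θ) = (s ^ 2 - r ^ 2) * cosh (2 * φ) := by
    rw [hθ, ← mul_assoc, mul_one_div_cancel two_ne_zero, one_mul]
    exact cos_arccos (abs_le.mp hbound).1 (abs_le.mp hbound).2
  obtain rfl : f = fun x y => torusPoint r s (a * x + b * y) (c * x + d * y) := funext₂ hf
  intro x y
  refine ⟨by rw [sum_torusPoint_sq, hrs], torusPoint_linear_harmonic r s a b c d x y hrs
    (clifford_coeff_sq_add_sq_eq hr hs hrs hcos ha hb hc hd), ?_, ?_, ?_⟩ <;>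
  simp only [(hasDerivAt_torusPoint_linear_fst r s a b c d y x).deriv,
    (hasDerivAt_torusPoint_linear_snd r s a b c d x y).deriv, sum_torusPoint_mul_torusPoint]
  exacts [clifford_coeff_energy_fst hr hs ha hc, clifford_coeff_orthogonal hr hs ha hb hc hd,
    clifford_coeff_energy_snd hr hs hb hd]

/-- The maps `f(x,y) = (r cos(ax+by), r sin(ax+by), s cos(cx+dy), s sin(cx+dy))` with
`r² + s² = 1`, `a = (2/r) sinh φ cos θ`, `b = -(2/r) cosh φ sin θ`, `c = (2/s) sinh φ sin θ`,
`d = (2/s) cosh φ cos θ` and `θ = (1/2) arccos((s²-r²) cosh 2φ)` map into `S³`, satisfy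
`f_xx + f_yy = -(|f_x|² + |f_y|²) f`, and have `⟨f_x,f_x⟩ = 4 sinh²φ`, `⟨f_x,f_y⟩ = 0`,
`⟨f_y,f_y⟩ = 4 cosh²φ`. -/
theorem clifford_torus_harmonic (r s φ θ a b c d : ℝ)
    (hr : r ≠ 0) (hs : s ≠ 0) (hrs : r ^ 2 + s ^ 2 = 1) (hφ : 0 < φ)
    (hbound : |(s ^ 2 - r ^ 2) * Real.cosh (2 * φ)| ≤ 1)
    (hθ : θ = (1 / 2) * Real.arccos ((s ^ 2 - r ^ 2) * Real.cosh (2 * φ)))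
    (ha : a = (2 / r) * Real.sinh φ * Real.cos θ)
    (hb : b = -(2 / r) * Real.cosh φ * Real.sin θ)
    (hc : c = (2 / s) * Real.sinh φ * Real.sin θ)
    (hd : d = (2 / s) * Real.cosh φ * Real.cos θ)
    (f : ℝ → ℝ → Fin 4 → ℝ)
    (hf : ∀ x y, f x y = ![r * Real.cos (a * x + b * y), r * Real.sin (a * x + b * y),
      s * Real.cos (c * x + d * y), s * Real.sin (c * x + d * y)]) :
    ∀ x y,
      (∑ i, f x y i ^ 2) = 1 ∧
      deriv (fun t => deriv (fun u => f u y) t) x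
          + deriv (fun t => deriv (fun u => f x u) t) y
        = -((∑ i, (deriv (fun t => f t y) x i) ^ 2)
            + (∑ i, (deriv (fun u => f x u) y i) ^ 2)) • f x y ∧
      (∑ i, deriv (fun t => f t y) x i * deriv (fun t => f t y) x i)
        = 4 * Real.sinh φ ^ 2 ∧
      (∑ i, deriv (fun t => f t y) x i * deriv (fun u => f x u) y i) = 0 ∧
      (∑ i, deriv (fun u => f x u) y i * deriv (fun u => f x u) y i)
        = 4 * Real.cosh φ ^ 2 :=
  clifford_torus_harmonic_general r s φ θ a b c d hr hs hrs hbound hθ ha hb hc hd f hf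
end
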